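/- Subformula property: every cut-free derivation in !^S_M MacLL (for any S ⊆ {c,w}, M ⊆ {k,t,4}) contains only formulas that are subformulas of formulas in the endsequent. -/

import Mathlib

/-- Multiplicative exponential formulas: variables, unit, !, ⊗, →, ←. -/
inductive Fm : Type where
  | var : Nat → Fm
  | one : Fm
  | bang : Fm → Fm
  | tens : Fm → Fm → Fm
  | arr : Fm → Fm → Fm      -- A → B
  | larr : Fm → Fm → Fm     -- B ← A
deriving DecidableEq

/-- Structures: binary trees of formulas, allowing the empty structure. -/
inductive Str : Type where
  | emp : Str
  | leaf : Fm → Str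
  | comma : Str → Str → Str
deriving DecidableEq

/-- One-hole structure contexts. -/
inductive Ctx : Type where
  | hole : Ctx
  | commaL : Ctx → Str → Ctx
  | commaR : Str → Ctx → Ctx

/-- Plug a structure into the hole of a context. -/
def Ctx.fill : Ctx → Str → Str
  | .hole, Δ => Δ
  | .commaL c Δ, P => .comma (c.fill P) Δ
  | .commaR Γ c, P => .comma Γ (c.fill P)

/-- !Γ : bang every leaf formula of a structure. -/
def bangStr : Str → Str
  | .emp => .emp
  | .leaf A => .leaf (.bang A)
  | .comma a b => .comma (bangStr a) (bangStr b)

/-- `StarBang Γ Γ'` : Γ' is Γ with some subset of its leaf formulas banged (!*Γ). -/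
inductive StarBang : Str → Str → Prop where
  | emp : StarBang .emp .emp
  | leaf (A : Fm) : StarBang (.leaf A) (.leaf A)
  | leafBang (A : Fm) : StarBang (.leaf A) (.leaf (.bang A))
  | comma {a a' b b' : Str} : StarBang a a' → StarBang b b' →
      StarBang (.comma a b) (.comma a' b')

/-- Proper structures: nonempty binary trees of formulas (no occurrence of the
empty structure), matching the grammar Γ ::= (Γ,Γ) | F. -/
inductive Str.proper : Str → Prop where
  | leaf (A : Fm) : (Str.leaf A).proper
  | comma {a b : Str} : a.proper → b.proper → (Str.comma a b).proper

/-- Flags selecting the optional modal/structural rules of a system. -/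
structure Flags where
  bangL : Bool := false
  bangR : Bool := false
  bangRK : Bool := false
  bangR4 : Bool := false
  bangRK4 : Bool := false
  contr : Bool := false     -- single-formula contraction C
  contrK : Bool := false    -- structural contraction CK
  weak : Bool := false      -- weakening W
  cut : Bool := false

/-- Sequent derivability in MacLL extended by the rules selected by `fl`,
with nonlogical axioms `Ax`. -/
inductive Der (fl : Flags) (Ax : Set (Str × Fm)) : Str → Fm → Prop where
  | ax {Γ : Str} {C : Fm} : (Γ, C) ∈ Ax → Der fl Ax Γ C
  | init (A : Fm) : Der fl Ax (.leaf A) A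
  | tensL (Γ : Ctx) {A B C : Fm} :
      Der fl Ax (Γ.fill (.comma (.leaf A) (.leaf B))) C →
      Der fl Ax (Γ.fill (.leaf (.tens A B))) C
  | tensR {Γ Δ : Str} {A B : Fm} :
      Der fl Ax Γ A → Der fl Ax Δ B → Der fl Ax (.comma Γ Δ) (.tens A B)
  | arrL (Γ : Ctx) {Δ : Str} {A B C : Fm} :
      Der fl Ax Δ A → Der fl Ax (Γ.fill (.leaf B)) C →
      Der fl Ax (Γ.fill (.comma Δ (.leaf (.arr A B)))) C
  | arrR {Γ : Str} {A B : Fm} :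
      Der fl Ax (.comma (.leaf A) Γ) B → Der fl Ax Γ (.arr A B)
  | larrL (Γ : Ctx) {Δ : Str} {A B C : Fm} :
      Der fl Ax Δ A → Der fl Ax (Γ.fill (.leaf B)) C →
      Der fl Ax (Γ.fill (.comma (.leaf (.larr B A)) Δ)) C
  | larrR {Γ : Str} {A B : Fm} :
      Der fl Ax (.comma Γ (.leaf A)) B → Der fl Ax Γ (.larr B A)
  | oneL (Γ : Ctx) {C : Fm} :
      Der fl Ax (Γ.fill .emp) C → Der fl Ax (Γ.fill (.leaf .one)) C
  | oneR : Der fl Ax .emp .one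
  | bangL (Γ : Ctx) {A C : Fm} : fl.bangL = true →
      Der fl Ax (Γ.fill (.leaf A)) C → Der fl Ax (Γ.fill (.leaf (.bang A))) C
  | bangR {A C : Fm} : fl.bangR = true →
      Der fl Ax (.leaf A) C → Der fl Ax (.leaf (.bang A)) (.bang C)
  | bangRK {Γ : Str} {C : Fm} : fl.bangRK = true →
      Der fl Ax Γ C → Der fl Ax (bangStr Γ) (.bang C)
  | bangR4 {A C : Fm} : fl.bangR4 = true →
      Der fl Ax (.leaf (.bang A)) C → Der fl Ax (.leaf (.bang A)) (.bang C)
  | bangRK4 {Γ Γ' : Str} {C : Fm} : fl.bangRK4 = true →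
      StarBang Γ Γ' → Der fl Ax Γ' C → Der fl Ax (bangStr Γ) (.bang C)
  | contr (Γ : Ctx) {A : Fm} {C : Fm} : fl.contr = true →
      Der fl Ax (Γ.fill (.comma (.leaf (.bang A)) (.leaf (.bang A)))) C →
      Der fl Ax (Γ.fill (.leaf (.bang A))) C
  | contrK (Γ : Ctx) {Δ : Str} {C : Fm} : fl.contrK = true → Δ.proper →
      Der fl Ax (Γ.fill (.comma (bangStr Δ) (bangStr Δ))) C →
      Der fl Ax (Γ.fill (bangStr Δ)) C
  | weak (Γ : Ctx) {A C : Fm} : fl.weak = true →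
      Der fl Ax (Γ.fill .emp) C → Der fl Ax (Γ.fill (.leaf (.bang A))) C
  | cut (Γ : Ctx) {Δ : Str} {A C : Fm} : fl.cut = true →
      Der fl Ax Δ A → Der fl Ax (Γ.fill (.leaf A)) C →
      Der fl Ax (Γ.fill Δ) C

/-- Plain MacLL (no modal or structural rules, no cut). -/
def macll : Flags := {}
/-- Translation τ into !-free formulas: τ(p_i)=p_{2i+1}, τ(!A)=p_{2⌈A⌉}. -/
def tau (enc : Fm → Nat) : Fm → Fm
  | .var i => .var (2 * i + 1)
  | .one => .one
  | .bang A => .var (2 * enc A)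
  | .tens A B => .tens (tau enc A) (tau enc B)
  | .arr A B => .arr (tau enc A) (tau enc B)
  | .larr A B => .larr (tau enc A) (tau enc B)

/-- Leafwise extension of τ to structures. -/
def tauStr (enc : Fm → Nat) : Str → Str
  | .emp => .emp
  | .leaf A => .leaf (tau enc A)
  | .comma a b => .comma (tauStr enc a) (tauStr enc b)

/-- The set of propositional variables of a formula. -/
def Fm.vars : Fm → Set Nat
  | .var i => {i}
  | .one => ∅
  | .bang A => A.vars
  | .tens A B => A.vars ∪ B.vars
  | .arr A B => A.vars ∪ B.vars
  | .larr A B => A.vars ∪ B.vars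

def Str.vars : Str → Set Nat
  | .emp => ∅
  | .leaf A => A.vars
  | .comma a b => a.vars ∪ b.vars

/-- Subformulas of a formula. -/
def Fm.sub : Fm → Set Fm
  | .var i => {.var i}
  | .one => {.one}
  | .bang A => insert (.bang A) A.sub
  | .tens A B => insert (.tens A B) (A.sub ∪ B.sub)
  | .arr A B => insert (.arr A B) (A.sub ∪ B.sub)
  | .larr A B => insert (.larr A B) (A.sub ∪ B.sub)

/-- The yield of a structure: the set of formulas occurring in it. -/
def Str.fms : Str → Set Fm
  | .emp => ∅
  | .leaf A => {A}
  | .comma a b => a.fms ∪ b.fms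

/-- !-free formulas. -/
def Fm.bangFree : Fm → Prop
  | .var _ => True
  | .one => True
  | .bang _ => False
  | .tens A B => A.bangFree ∧ B.bangFree
  | .arr A B => A.bangFree ∧ B.bangFree
  | .larr A B => A.bangFree ∧ B.bangFree

def Str.bangFree : Str → Prop
  | .emp => True
  | .leaf A => A.bangFree
  | .comma a b => a.bangFree ∧ b.bangFree

/-- The flags of the cut-free system !^S_M MacLL, for S ⊆ {c,w} and M ⊆ {k,t,4}
given by Booleans c, w, k, t, f4. -/
def sysFlags (c w k t f4 : Bool) : Flags where
  bangL := t
  bangR := !k && !f4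
  bangRK := k && !f4
  bangR4 := !k && f4
  bangRK4 := k && f4
  contr := c && !k
  contrK := c && k
  weak := w
  cut := false

/-- MacLL with cut (used with nonlogical axioms). -/
def macllCut : Flags := { cut := true }
/-- Derivability where every sequent occurring in the derivation (as the
conclusion of some rule) satisfies the predicate `good`. -/
inductive DerG (fl : Flags) (Ax : Set (Str × Fm)) (good : Str → Fm → Prop) :
    Str → Fm → Prop where
  | ax {Γ : Str} {C : Fm} : (Γ, C) ∈ Ax → good Γ C → DerG fl Ax good Γ C
  | init (A : Fm) : good (.leaf A) A → DerG fl Ax good (.leaf A) A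
  | tensL (Γ : Ctx) {A B C : Fm} :
      good (Γ.fill (.leaf (.tens A B))) C →
      DerG fl Ax good (Γ.fill (.comma (.leaf A) (.leaf B))) C →
      DerG fl Ax good (Γ.fill (.leaf (.tens A B))) C
  | tensR {Γ Δ : Str} {A B : Fm} : good (.comma Γ Δ) (.tens A B) →
      DerG fl Ax good Γ A → DerG fl Ax good Δ B →
      DerG fl Ax good (.comma Γ Δ) (.tens A B)
  | arrL (Γ : Ctx) {Δ : Str} {A B C : Fm} :
      good (Γ.fill (.comma Δ (.leaf (.arr A B)))) C →
      DerG fl Ax good Δ A → DerG fl Ax good (Γ.fill (.leaf B)) C →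
      DerG fl Ax good (Γ.fill (.comma Δ (.leaf (.arr A B)))) C
  | arrR {Γ : Str} {A B : Fm} : good Γ (.arr A B) →
      DerG fl Ax good (.comma (.leaf A) Γ) B → DerG fl Ax good Γ (.arr A B)
  | larrL (Γ : Ctx) {Δ : Str} {A B C : Fm} :
      good (Γ.fill (.comma (.leaf (.larr B A)) Δ)) C →
      DerG fl Ax good Δ A → DerG fl Ax good (Γ.fill (.leaf B)) C →
      DerG fl Ax good (Γ.fill (.comma (.leaf (.larr B A)) Δ)) C
  | larrR {Γ : Str} {A B : Fm} : good Γ (.larr B A) →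
      DerG fl Ax good (.comma Γ (.leaf A)) B → DerG fl Ax good Γ (.larr B A)
  | oneL (Γ : Ctx) {C : Fm} : good (Γ.fill (.leaf .one)) C →
      DerG fl Ax good (Γ.fill .emp) C → DerG fl Ax good (Γ.fill (.leaf .one)) C
  | oneR : good .emp .one → DerG fl Ax good .emp .one
  | bangL (Γ : Ctx) {A C : Fm} : fl.bangL = true →
      good (Γ.fill (.leaf (.bang A))) C →
      DerG fl Ax good (Γ.fill (.leaf A)) C →
      DerG fl Ax good (Γ.fill (.leaf (.bang A))) C
  | bangR {A C : Fm} : fl.bangR = true → good (.leaf (.bang A)) (.bang C) →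
      DerG fl Ax good (.leaf A) C → DerG fl Ax good (.leaf (.bang A)) (.bang C)
  | bangRK {Γ : Str} {C : Fm} : fl.bangRK = true → good (bangStr Γ) (.bang C) →
      DerG fl Ax good Γ C → DerG fl Ax good (bangStr Γ) (.bang C)
  | bangR4 {A C : Fm} : fl.bangR4 = true → good (.leaf (.bang A)) (.bang C) →
      DerG fl Ax good (.leaf (.bang A)) C →
      DerG fl Ax good (.leaf (.bang A)) (.bang C)
  | bangRK4 {Γ Γ' : Str} {C : Fm} : fl.bangRK4 = true →
      good (bangStr Γ) (.bang C) → StarBang Γ Γ' → DerG fl Ax good Γ' C →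
      DerG fl Ax good (bangStr Γ) (.bang C)
  | contr (Γ : Ctx) {A : Fm} {C : Fm} : fl.contr = true →
      good (Γ.fill (.leaf (.bang A))) C →
      DerG fl Ax good (Γ.fill (.comma (.leaf (.bang A)) (.leaf (.bang A)))) C →
      DerG fl Ax good (Γ.fill (.leaf (.bang A))) C
  | contrK (Γ : Ctx) {Δ : Str} {C : Fm} : fl.contrK = true → Δ.proper →
      good (Γ.fill (bangStr Δ)) C →
      DerG fl Ax good (Γ.fill (.comma (bangStr Δ) (bangStr Δ))) C →
      DerG fl Ax good (Γ.fill (bangStr Δ)) C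
  | weak (Γ : Ctx) {A C : Fm} : fl.weak = true →
      good (Γ.fill (.leaf (.bang A))) C →
      DerG fl Ax good (Γ.fill .emp) C →
      DerG fl Ax good (Γ.fill (.leaf (.bang A))) C
  | cut (Γ : Ctx) {Δ : Str} {A C : Fm} : fl.cut = true → good (Γ.fill Δ) C →
      DerG fl Ax good Δ A → DerG fl Ax good (Γ.fill (.leaf A)) C →
      DerG fl Ax good (Γ.fill Δ) C

/-!
Read bottom-up, every cut-free rule only deletes formulas or replaces a formula of the
conclusion by its immediate subformulas (in `!RK4` a premise formula is `A` or `!A` for `!A` in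
the conclusion). Hence, by induction on the derivation, all its formulas stay inside any
subformula-closed set containing the endsequent, in particular inside the set of subformulas
of the endsequent.
-/

namespace Fm

@[simp]
theorem mem_sub_self (A : Fm) : A ∈ A.sub := by
  cases A <;> simp [Fm.sub]

theorem mem_sub_trans {A B C : Fm} (hB : B ∈ A.sub) (hC : C ∈ B.sub) : C ∈ A.sub := by
  induction A with
  | var | one => simp_all [Fm.sub]
  | bang A ih =>
    simp only [Fm.sub, Set.mem_insert_iff] at hB ⊢
    rcases hB with rfl | hB
    · simpa [Fm.sub] using hC
    · exact .inr (ih hB)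
  | tens A A' ih ih' | arr A A' ih ih' | larr A A' ih ih' =>
    simp only [Fm.sub, Set.mem_insert_iff, Set.mem_union] at hB ⊢
    rcases hB with rfl | hB | hB
    · simpa [Fm.sub] using hC
    · exact .inr (.inl (ih hB))
    · exact .inr (.inr (ih' hB))

def IsSubClosed (S : Set Fm) : Prop := ∀ ⦃A⦄, A ∈ S → A.sub ⊆ S

theorem isSubClosed_setOf_mem_sub (X : Set Fm) : IsSubClosed {F | ∃ G ∈ X, F ∈ G.sub} :=
  fun _ ⟨G, hG, hA⟩ _ hB => ⟨G, hG, mem_sub_trans hA hB⟩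

namespace IsSubClosed

variable {S : Set Fm} {A B : Fm}

theorem of_bang (hS : IsSubClosed S) (h : bang A ∈ S) : A ∈ S :=
  hS h (by simp [Fm.sub])

theorem of_tens (hS : IsSubClosed S) (h : tens A B ∈ S) : A ∈ S ∧ B ∈ S :=
  ⟨hS h (by simp [Fm.sub]), hS h (by simp [Fm.sub])⟩

theorem of_arr (hS : IsSubClosed S) (h : arr A B ∈ S) : A ∈ S ∧ B ∈ S :=
  ⟨hS h (by simp [Fm.sub]), hS h (by simp [Fm.sub])⟩

theorem of_larr (hS : IsSubClosed S) (h : larr A B ∈ S) : A ∈ S ∧ B ∈ S :=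
  ⟨hS h (by simp [Fm.sub]), hS h (by simp [Fm.sub])⟩


theorem of_bang_image {X : Set Fm} (hS : IsSubClosed S) (h : bang '' X ⊆ S) : X ⊆ S :=
  fun _ hA => hS.of_bang (h ⟨_, hA, rfl⟩)

end IsSubClosed

end Fm

def Ctx.fms : Ctx → Set Fm
  | .hole => ∅
  | .commaL Γ Δ => Γ.fms ∪ Δ.fms
  | .commaR Δ Γ => Δ.fms ∪ Γ.fms

@[simp]
theorem Ctx.fms_fill (Γ : Ctx) (P : Str) : (Γ.fill P).fms = Γ.fms ∪ P.fms := by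
  induction Γ with
  | hole => simp [Ctx.fill, Ctx.fms]
  | commaL Γ Δ ih => simp only [Ctx.fill, Ctx.fms, Str.fms, ih, Set.union_right_comm]
  | commaR Δ Γ ih => simp only [Ctx.fill, Ctx.fms, Str.fms, ih, Set.union_assoc]

@[simp]
theorem Str.fms_bangStr (Γ : Str) : (bangStr Γ).fms = Fm.bang '' Γ.fms := by
  induction Γ with
  | emp => simp [bangStr, Str.fms]
  | leaf A => simp [bangStr, Str.fms]
  | comma a b iha ihb => simp [bangStr, Str.fms, iha, ihb, Set.image_union]

theorem StarBang.fms_subset {Γ Γ' : Str} (h : StarBang Γ Γ') :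
    Γ'.fms ⊆ Γ.fms ∪ Fm.bang '' Γ.fms := by
  induction h with
  | emp => simp [Str.fms]
  | leaf A => simp [Str.fms]
  | leafBang A => simp [Str.fms]
  | comma _ _ iha ihb =>
    simp only [Str.fms, Set.image_union]
    exact Set.union_subset (iha.trans (by gcongr <;> simp)) (ihb.trans (by gcongr <;> simp))

open Fm in
theorem Der.derG_of_fms_subset {fl : Flags} {Ax : Set (Str × Fm)} (hcut : fl.cut = false)
    {S : Set Fm} (hS : IsSubClosed S) {Δ : Str} {D : Fm} (h : Der fl Ax Δ D)
    (hΔ : insert D Δ.fms ⊆ S) : DerG fl Ax (fun Δ D => insert D Δ.fms ⊆ S) Δ D := by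
  induction h with
  | ax hAx => exact .ax hAx hΔ
  | init A => exact .init A hΔ
  | @tensL Γ A B C _ ih =>
    have hAB : A ∈ S ∧ B ∈ S := hS.of_tens (hΔ (by simp [Str.fms]))
    exact .tensL Γ hΔ (ih (by simp_all [Set.insert_subset_iff, Str.fms]))
  | @tensR Γ Δ A B _ _ ih₁ ih₂ =>
    have hAB : A ∈ S ∧ B ∈ S := hS.of_tens (hΔ (by simp [Str.fms]))
    refine .tensR hΔ (ih₁ ?_) (ih₂ ?_) <;> simp_all [Set.insert_subset_iff, Str.fms]
  | @arrL Γ Δ A B C _ _ ih₁ ih₂ =>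
    have hAB : A ∈ S ∧ B ∈ S := hS.of_arr (hΔ (by simp [Str.fms]))
    refine .arrL Γ hΔ (ih₁ ?_) (ih₂ ?_) <;> simp_all [Set.insert_subset_iff, Str.fms]
  | @arrR Γ A B _ ih =>
    have hAB : A ∈ S ∧ B ∈ S := hS.of_arr (hΔ (by simp))
    exact .arrR hΔ (ih (by simp_all [Set.insert_subset_iff, Str.fms]))
  | @larrL Γ Δ A B C _ _ ih₁ ih₂ =>
    have hAB : B ∈ S ∧ A ∈ S := hS.of_larr (hΔ (by simp [Str.fms]))
    refine .larrL Γ hΔ (ih₁ ?_) (ih₂ ?_) <;> simp_all [Set.insert_subset_iff, Str.fms]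
  | @larrR Γ A B _ ih =>
    have hAB : B ∈ S ∧ A ∈ S := hS.of_larr (hΔ (by simp))
    exact .larrR hΔ (ih (by simp_all [Set.insert_subset_iff, Str.fms]))
  | oneL Γ _ ih =>
    exact .oneL Γ hΔ (ih (by simp_all [Set.insert_subset_iff, Str.fms]))
  | oneR => exact .oneR hΔ
  | @bangL Γ A C hfl _ ih =>
    have hA : A ∈ S := hS.of_bang (hΔ (by simp [Str.fms]))
    exact .bangL Γ hfl hΔ (ih (by simp_all [Set.insert_subset_iff, Str.fms]))
  | @bangR A C hfl _ ih =>
    have hA : A ∈ S := hS.of_bang (hΔ (by simp [Str.fms]))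
    have hC : C ∈ S := hS.of_bang (hΔ (by simp [Str.fms]))
    exact .bangR hfl hΔ (ih (by simp_all [Set.insert_subset_iff, Str.fms]))
  | @bangRK Γ C hfl _ ih =>
    obtain ⟨hC, hΓ⟩ := Set.insert_subset_iff.mp hΔ
    rw [Str.fms_bangStr] at hΓ
    exact .bangRK hfl hΔ (ih (Set.insert_subset (hS.of_bang hC) (hS.of_bang_image hΓ)))
  | @bangR4 A C hfl _ ih =>
    have hC : C ∈ S := hS.of_bang (hΔ (by simp [Str.fms]))
    exact .bangR4 hfl hΔ (ih (by simp_all [Set.insert_subset_iff, Str.fms]))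
  | @bangRK4 Γ Γ' C hfl hΓ' _ ih =>
    obtain ⟨hC, hΓ⟩ := Set.insert_subset_iff.mp hΔ
    rw [Str.fms_bangStr] at hΓ
    have hΓ'S : Γ'.fms ⊆ S :=
      hΓ'.fms_subset.trans (Set.union_subset (hS.of_bang_image hΓ) hΓ)
    exact .bangRK4 hfl hΔ hΓ' (ih (Set.insert_subset (hS.of_bang hC) hΓ'S))
  | contr Γ hfl _ ih =>
    exact .contr Γ hfl hΔ (ih (by simp_all [Set.insert_subset_iff, Str.fms]))
  | contrK Γ hfl hΔ' _ ih =>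
    exact .contrK Γ hfl hΔ' hΔ (ih (by simp_all [Set.insert_subset_iff, Str.fms]))
  | weak Γ hfl _ ih =>
    exact .weak Γ hfl hΔ (ih (by simp_all [Set.insert_subset_iff, Str.fms]))
  | cut _ hfl => simp [hcut] at hfl

/-- Subformula property: every cut-free derivation in !^S_M MacLL contains only
formulas that are subformulas of formulas of the endsequent. -/
theorem stmt14 (c w k t f4 : Bool) (Γ : Str) (C : Fm)
    (h : Der (sysFlags c w k t f4) ∅ Γ C) :
    DerG (sysFlags c w k t f4) ∅
      (fun Δ D => ∀ F ∈ insert D Δ.fms, ∃ G ∈ insert C Γ.fms, F ∈ G.sub)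
      Γ C :=
  h.derG_of_fms_subset rfl (Fm.isSubClosed_setOf_mem_sub _) fun F hF => ⟨F, hF, F.mem_sub_self⟩
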